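/- arXiv:1508.02262 — 2 statements merged into one kernel-verified Lean document; each statement's English description precedes it below -/
import Mathlib

section
/- The one-step Kiefer-Wolfowitz map is monotone: for fixed $V \ge 0$ and $A \ge 0$, if $w, w' \in \mathbb{R}^c_{\ge 0}$ are sorted ascending vectors with $w_i \le w'_i$ for all $i$, then $\mathcal{S}((w + V e_1 - A \mathbf{1})^+)_i \le \mathcal{S}((w' + V e_1 - A \mathbf{1})^+)_i$ for all $i$. -/
open Filter

noncomputable def sortVec {c : ℕ} (w : Fin c → ℝ) : Fin c → ℝ := w ∘ Tuple.sort w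

noncomputable def kwStep {c : ℕ} (V A : ℝ) (w : Fin c → ℝ) : Fin c → ℝ :=
  sortVec (fun i => max (w i + (if (i : ℕ) = 0 then V else 0) - A) 0)

noncomputable def kwIter {c : ℕ} (V A : ℕ → ℝ) (w : Fin c → ℝ) : ℕ → Fin c → ℝ
  | 0 => w
  | n + 1 => kwStep (V n) (A n) (kwIter V A w n)

/-! The `i`-th smallest entry of a tuple is characterised by counting: `(f ∘ sort f) i ≤ a` iff
more than `i` entries of `f` are `≤ a`. Raising every entry can only lower these counts, hence
it raises every order statistic. Positive part and the shift by `V e₁ - A 𝟏` are monotone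
coordinatewise, so the Kiefer-Wolfowitz step is monotone. -/

open Finset

namespace Tuple

variable {n : ℕ} {α : Type*} [LinearOrder α]

theorem card_filter_comp_perm (σ : Equiv.Perm (Fin n)) (p : Fin n → Prop) [DecidablePred p] :
    #{i | p (σ i)} = #{i | p i} :=
  card_equiv σ fun _ => by simp

theorem comp_sort_mono : Monotone fun f : Fin n → α => f ∘ sort f := by
  intro f g hfg i
  set a := (g ∘ sort g) i
  have hg : i < #{j | (g ∘ sort g) j ≤ a} :=
    (lt_card_le_iff_apply_le_of_monotone (monotone_sort g)).2 le_rfl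
  refine (lt_card_le_iff_apply_le_of_monotone (monotone_sort f)).1 ?_
  calc (i : ℕ) < #{j | g j ≤ a} := hg.trans_eq (card_filter_comp_perm (sort g) (g · ≤ a))
    _ ≤ #{j | f j ≤ a} := card_le_card fun j => by simpa using (hfg j).trans
    _ = #{j | (f ∘ sort f) j ≤ a} := (card_filter_comp_perm (sort f) (f · ≤ a)).symm

end Tuple

theorem sortVec_mono {c : ℕ} : Monotone (sortVec (c := c)) :=
  Tuple.comp_sort_mono

theorem kwStep_mono {c : ℕ} (V A : ℝ) : Monotone (kwStep (c := c) V A) :=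
  fun _ _ hle => sortVec_mono fun i => by gcongr; exact hle i

theorem kwStep_monotone_general {c : ℕ} (V A : ℝ)
    (w w' : Fin c → ℝ)
    (hle : ∀ i, w i ≤ w' i) :
    ∀ i, kwStep V A w i ≤ kwStep V A w' i :=
  kwStep_mono V A hle

/-- one-step Kiefer-Wolfowitz map is monotone. -/
theorem kwStep_monotone {c : ℕ} (V A : ℝ) (hV : 0 ≤ V) (hA : 0 ≤ A)
    (w w' : Fin c → ℝ) (hw0 : ∀ i, 0 ≤ w i) (hw'0 : ∀ i, 0 ≤ w' i)
    (hws : Monotone w) (hw's : Monotone w')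
    (hle : ∀ i, w i ≤ w' i) :
    ∀ i, kwStep V A w i ≤ kwStep V A w' i :=
  kwStep_monotone_general V A w w' hle
end

section
/- For the deterministic Kiefer-Wolfowitz recursion with constant inputs $V_k \equiv cm - \epsilon$ and $A_k \equiv m$ (where $m, \epsilon > 0$, $c \ge 1$ integer), started from any sorted vector $w$ with largest entry $w_c \le K$: after $\lceil cK/\epsilon \rceil$ steps and during the next $c$ steps, the smallest entry of the iterate is $0$ and the largest entry is strictly less than $cm$. -/
open Filter

/-!
The iterates are dominated by the profile
`drainBound c m ε t k = max (t + k (m - ε / c)) (max (k m - ε) 0)`, whose parameter `t` drops by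
`ε / c` at every step. Before sorting, entry `k + 1` of the update loses `m` and is bounded by
entry `k` of the next profile, while entry `0`, which receives the input `cm - ε`, is bounded by
the top entry `c - 1`; so the update is dominated by a rotation of the next profile, and sorting
keeps componentwise bounds against a monotone profile. Once `t ≤ -ε / c` the profile vanishes at
index `0` and stays below `cm`.
-/

namespace Tuple

variable {n : ℕ} {α : Type*} [LinearOrder α]

theorem comp_sort_le_comp_sort {f g : Fin n → α} (h : ∀ i, f i ≤ g i) (j : Fin n) :
    (f ∘ sort f) j ≤ (g ∘ sort g) j := by
  classical
  set a := (g ∘ sort g) j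
  have card_perm (u : Fin n → α) (σ : Equiv.Perm (Fin n)) :
      Fintype.card {i // (u ∘ σ) i ≤ a} = Fintype.card {i // u i ≤ a} :=
    Fintype.card_congr (σ.subtypeEquiv fun _ => Iff.rfl)
  have hg : j < Fintype.card {i // g i ≤ a} := by
    rw [← card_perm g (sort g), Fintype.card_subtype]
    exact (lt_card_le_iff_apply_le_of_monotone (monotone_sort g)).2 le_rfl
  refine (lt_card_le_iff_apply_le_of_monotone (monotone_sort f)).1 ?_
  rw [← Fintype.card_subtype, card_perm]
  exact hg.trans_le (Fintype.card_subtype_mono _ _ fun i hi => (h i).trans hi)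

theorem comp_sort_le_of_comp_perm_le {f g : Fin n → α} (hg : Monotone g)
    (σ : Equiv.Perm (Fin n)) (h : ∀ i, f (σ i) ≤ g i) (j : Fin n) : (f ∘ sort f) j ≤ g j := by
  have hsorted : g ∘ sort g = g := by rw [sort_eq_refl_iff_monotone.2 hg]; rfl
  rw [← comp_perm_comp_sort_eq_comp_sort (σ := σ), ← hsorted]
  exact comp_sort_le_comp_sort h j

end Tuple

noncomputable def drainBound (c : ℕ) (m ε t : ℝ) (k : ℕ) : ℝ :=
  max (t + k * (m - ε / c)) (max (k * m - ε) 0)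

section drainBound

variable {c : ℕ} {m ε : ℝ}

lemma drainBound_nonneg (t : ℝ) (k : ℕ) : 0 ≤ drainBound c m ε t k :=
  (le_max_right _ _).trans (le_max_right _ _)

lemma drainBound_mono (hm : 0 ≤ m) (hεcm : ε ≤ c * m) (t : ℝ) : Monotone (drainBound c m ε t) := by
  have hμ : 0 ≤ m - ε / c := by
    rcases c.eq_zero_or_pos with rfl | hc
    · simpa using hm
    · rw [sub_nonneg, div_le_iff₀ (by positivity)]; linarith
  intro k l hkl
  have hkl' : (k : ℝ) ≤ l := by exact_mod_cast hkl
  unfold drainBound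
  gcongr

lemma drainBound_succ_sub_le (hm : 0 ≤ m) (t : ℝ) (k : ℕ) :
    drainBound c m ε t (k + 1) - m ≤ drainBound c m ε (t - ε / c) k := by
  unfold drainBound
  rw [← max_sub_sub_right, ← max_sub_sub_right]
  push_cast
  exact max_le_max (le_of_eq (by ring)) (max_le_max (le_of_eq (by ring)) (by linarith))

lemma drainBound_zero_add_le (hε : 0 ≤ ε) (t : ℝ) :
    drainBound (c + 1) m ε t 0 + ((c + 1 : ℕ) * m - ε) - m ≤
      drainBound (c + 1) m ε (t - ε / (c + 1 : ℕ)) c := by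
  have hzero : drainBound (c + 1) m ε t 0 = max t 0 := by
    simp [drainBound, max_eq_right (neg_nonpos.2 hε)]
  have hwrap : t - ε / (c + 1 : ℕ) + c * (m - ε / (c + 1 : ℕ)) = t + c * m - ε := by
    field_simp; push_cast; ring
  rw [hzero, drainBound, hwrap, ← max_add_add_right, ← max_sub_sub_right]
  push_cast
  exact max_le_max (le_of_eq (by ring)) ((le_of_eq (by ring)).trans (le_max_left _ _))

lemma le_drainBound_zero (t : ℝ) : t ≤ drainBound c m ε t 0 :=
  le_max_of_le_left (by simp)

lemma drainBound_zero_of_nonpos (hε : 0 ≤ ε) {t : ℝ} (ht : t ≤ 0) : drainBound c m ε t 0 = 0 := by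
  simp [drainBound, ht, hε]

lemma drainBound_lt (hε : 0 < ε) (hm : 0 < m) {t : ℝ} (ht : t ≤ -(ε / c)) {k : ℕ} (hk : k < c) :
    drainBound c m ε t k < c * m := by
  have hc : (0 : ℝ) < c := by exact_mod_cast k.zero_le.trans_lt hk
  have hk' : (k : ℝ) + 1 ≤ c := by exact_mod_cast hk
  have hkm : k * m < c * m := by nlinarith
  have hdrift : t + k * (m - ε / c) ≤ k * m - (k + 1) * (ε / c) := by linarith
  have hloss : 0 < (k + 1) * (ε / c) := by positivity
  unfold drainBound
  exact max_lt (by linarith) (max_lt (by linarith) (by positivity))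

end drainBound

lemma kwIter_succ_nonneg {c : ℕ} (V A : ℕ → ℝ) (w : Fin c → ℝ) (n : ℕ) (i : Fin c) :
    0 ≤ kwIter V A w (n + 1) i :=
  le_max_right _ _

section kwIter

variable {c : ℕ} {m ε : ℝ}

lemma kwStep_le_drainBound (hε : 0 ≤ ε) (hm : 0 ≤ m) (hεcm : ε ≤ c * m) {t : ℝ}
    {W : Fin c → ℝ} (hW : ∀ i, W i ≤ drainBound c m ε t i) (j : Fin c) :
    kwStep (c * m - ε) m W j ≤ drainBound c m ε (t - ε / c) j := by
  cases c with
  | zero => exact j.elim0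
  | succ c =>
    unfold kwStep sortVec
    refine Tuple.comp_sort_le_of_comp_perm_le (fun k l h => drainBound_mono hm hεcm _ h)
      (finRotate _) (fun k => max_le ?_ (drainBound_nonneg _ _)) j
    rcases eq_or_ne k (Fin.last c) with rfl | hk
    · rw [finRotate_last]
      simp only [Fin.val_zero, if_true, Fin.val_last]
      have h0 : W 0 ≤ drainBound (c + 1) m ε t 0 := hW 0
      exact (sub_le_sub_right (add_le_add h0 le_rfl) m).trans (drainBound_zero_add_le hε t)
    · have hk1 : (finRotate _ k : ℕ) = k + 1 := coe_finRotate_of_ne_last hk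
      have h := hW (finRotate _ k)
      rw [hk1] at h
      rw [hk1, if_neg k.val.succ_ne_zero, add_zero]
      exact (sub_le_sub_right h m).trans (drainBound_succ_sub_le hm t k)

lemma kwIter_le_drainBound (hε : 0 ≤ ε) (hm : 0 ≤ m) (hεcm : ε ≤ c * m) {K : ℝ}
    {w : Fin c → ℝ} (hwK : ∀ i, w i ≤ K) (n : ℕ) (i : Fin c) :
    kwIter (fun _ => c * m - ε) (fun _ => m) w n i ≤ drainBound c m ε (K - n * (ε / c)) i := by
  induction n generalizing i with
  | zero =>
    simpa [kwIter] using
      (hwK i).trans ((le_drainBound_zero K).trans (drainBound_mono hm hεcm K i.val.zero_le))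
  | succ n ih =>
    have ht : K - (n + 1 : ℕ) * (ε / c) = K - n * (ε / c) - ε / c := by push_cast; ring
    rw [ht]
    exact kwStep_le_drainBound hε hm hεcm ih i

end kwIter

theorem drain_down_general {c : ℕ} (hc : 0 < c) (m ε K : ℝ) (hε : 0 < ε)
    (hεcm : ε < c * m)
    (w : Fin c → ℝ) (hwK : ∀ i, w i ≤ K) :
    ∀ n, ⌈(c : ℝ) * K / ε⌉₊ + 1 ≤ n → n ≤ ⌈(c : ℝ) * K / ε⌉₊ + c →
      kwIter (fun _ => c * m - ε) (fun _ => m) w n ⟨0, hc⟩ = 0 ∧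
      ∀ i, kwIter (fun _ => c * m - ε) (fun _ => m) w n i < c * m := by
  intro n hn _
  have hcR : (0 : ℝ) < c := by exact_mod_cast hc
  have hm : 0 < m := pos_of_mul_pos_right (hε.trans hεcm) hcR.le
  have hdrained : K - n * (ε / c) ≤ -(ε / c) := by
    have hn' : c * K / ε + 1 ≤ n := by
      have hceil := Nat.le_ceil (c * K / ε)
      have hn_cast : ((⌈(c : ℝ) * K / ε⌉₊ + 1 : ℕ) : ℝ) ≤ n := by exact_mod_cast hn
      push_cast at hn_cast
      linarith
    calc K - n * (ε / c) ≤ K - (c * K / ε + 1) * (ε / c) := by gcongr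
      _ = -(ε / c) := by field_simp; ring
  have hbound := kwIter_le_drainBound hε.le hm.le hεcm.le hwK n
  obtain ⟨n, rfl⟩ := Nat.exists_eq_add_one.2 (Nat.succ_pos _ |>.trans_le hn)
  refine ⟨le_antisymm ?_ (kwIter_succ_nonneg _ _ _ _ _), fun i => ?_⟩
  · have ht : K - ↑(n + 1) * (ε / c) ≤ 0 := hdrained.trans (neg_nonpos.2 (div_pos hε hcR).le)
    exact (hbound _).trans_eq (drainBound_zero_of_nonpos hε.le ht)
  · exact (hbound i).trans_lt (drainBound_lt hε hm hdrained i.isLt)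

/-- drain-down of the constant-input Kiefer-Wolfowitz recursion. -/
theorem drain_down {c : ℕ} (hc : 0 < c) (m ε K : ℝ) (hm : 0 < m) (hε : 0 < ε)
    (hεcm : ε < c * m) (hK : c * m < K)
    (w : Fin c → ℝ) (hw0 : ∀ i, 0 ≤ w i) (hws : Monotone w) (hwK : ∀ i, w i ≤ K) :
    ∀ n, ⌈(c : ℝ) * K / ε⌉₊ + 1 ≤ n → n ≤ ⌈(c : ℝ) * K / ε⌉₊ + c →
      kwIter (fun _ => c * m - ε) (fun _ => m) w n ⟨0, hc⟩ = 0 ∧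
      ∀ i, kwIter (fun _ => c * m - ε) (fun _ => m) w n i < c * m :=
  drain_down_general hc m ε K hε hεcm w hwK
end
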